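/- Invariance to duplication: Let = E[(V̂ − c𝟙)(V̂ − c𝟙)ᵀ] ∈ ℝ^{k×k} be positive definite and let B ∈ ℝ^{(k+1)×(k+1)} be the analogous matrix for the vector (V̂₁,…,V̂ₖ, V̂ₖ₊₁) where V̂ₖ₊₁ = V̂ₖ almost surely. If α̂ minimizes αᵀ Â α subject to ∑ᵢ₌₁ᵏ αᵢ = 1, and β* minimizes βᵀ B β subject to ∑ᵢ₌₁^{k+1} βᵢ = 1, then ∑ᵢ₌₁^{k+1} β*ᵢ V̂ᵢ = ∑ᵢ₌₁ᵏ α̂ᵢ V̂ᵢ almost surely. -/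

import Mathlib

/-!
Merging the two copies of `V̂ₖ` is the map `f : Fin (k + 1) → Fin k` with `B = A.submatrix f f`.
Summing a weight vector over the fibres of `f` preserves the constraint `∑ wᵢ = 1`, the quadratic
form, and the combination `∑ wᵢ V̂ᵢ`, and every weight vector on `Fin k` arises this way. Hence it
sends the `B`-minimizer `β` to an `A`-minimizer, which is `α̂` because a positive definite form is
strictly convex.
-/

open MeasureTheory Matrix

open Finset in
def fiberSum {ι κ R : Type*} [Fintype ι] [DecidableEq κ] [AddCommMonoid R]
    (f : ι → κ) (γ : ι → R) (a : κ) : R :=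
  ∑ i with f i = a, γ i

section fiberSum

open Finset Function

variable {ι κ R : Type*} [Fintype ι] [DecidableEq κ]

theorem fiberSum_surjective [AddCommMonoid R] {f : ι → κ} (hf : Surjective f) :
    Surjective (fiberSum (R := R) f) := by
  intro α
  set g := surjInv hf
  have hfg : LeftInverse f g := rightInverse_surjInv hf
  refine ⟨extend g α 0, funext fun a => ?_⟩
  rw [fiberSum, sum_eq_single_of_mem (g a) (by simp [hfg a]), hfg.injective.extend_apply]
  intro i hi hne
  refine extend_apply' _ _ _ ?_
  rintro ⟨b, rfl⟩
  rw [mem_filter, hfg b] at hi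
  exact hne (hi.2 ▸ rfl)

variable [Fintype κ]

theorem sum_fiberSum [AddCommMonoid R] (f : ι → κ) (γ : ι → R) :
    ∑ a, fiberSum f γ a = ∑ i, γ i :=
  sum_fiberwise univ f γ

theorem dotProduct_comp [CommSemiring R] (f : ι → κ) (γ : ι → R) (v : κ → R) :
    γ ⬝ᵥ (v ∘ f) = fiberSum f γ ⬝ᵥ v := by
  simp only [dotProduct, fiberSum, sum_mul, Function.comp_apply]
  rw [← sum_fiberwise univ f]
  refine sum_congr rfl fun a _ => sum_congr rfl fun i hi => ?_
  rw [(mem_filter.1 hi).2]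

theorem submatrix_mulVec_eq_comp [CommSemiring R] {μ : Type*} (A : Matrix κ κ R) (e : μ → κ)
    (f : ι → κ) (γ : ι → R) :
    A.submatrix e f *ᵥ γ = (A *ᵥ fiberSum f γ) ∘ e := by
  ext i
  rw [Function.comp_apply, mulVec, mulVec, dotProduct_comm, dotProduct_comm (A (e i))]
  exact dotProduct_comp f γ (A (e i))

theorem dotProduct_submatrix_mulVec [CommSemiring R] (A : Matrix κ κ R) (f : ι → κ)
    (γ : ι → R) :
    γ ⬝ᵥ A.submatrix f f *ᵥ γ = fiberSum f γ ⬝ᵥ A *ᵥ fiberSum f γ := by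
  rw [submatrix_mulVec_eq_comp, dotProduct_comp]

end fiberSum

section QuadraticForm

open Finset

variable {n : Type*} [Fintype n]

theorem convex_setOf_sum_eq_one : Convex ℝ {x : n → ℝ | ∑ i, x i = 1} := by
  intro x hx y hy a b _ _ hab
  simp only [Set.mem_ofPred_eq, Pi.add_apply, Pi.smul_apply, smul_eq_mul, sum_add_distrib,
    ← mul_sum] at hx hy ⊢
  rw [hx, hy, mul_one, mul_one, hab]

theorem Matrix.parallelogram_law_dotProduct_mulVec {R : Type*}
    [CommRing R] (A : Matrix n n R) (x y : n → R) :
    (x + y) ⬝ᵥ A *ᵥ (x + y) + (x - y) ⬝ᵥ A *ᵥ (x - y) =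
      2 * (x ⬝ᵥ A *ᵥ x) + 2 * (y ⬝ᵥ A *ᵥ y) := by
  simp only [mulVec_add, mulVec_sub, add_dotProduct, sub_dotProduct, dotProduct_add,
    dotProduct_sub]
  ring

-- The midpoint of two distinct minimizers would do strictly better, by the parallelogram law.
theorem Matrix.PosDef.eq_of_isMinOn {A : Matrix n n ℝ} (hA : A.PosDef) {S : Set (n → ℝ)}
    (hS : Convex ℝ S) {x y : n → ℝ} (hxS : x ∈ S) (hyS : y ∈ S)
    (hx : IsMinOn (fun z => z ⬝ᵥ A *ᵥ z) S x) (hy : IsMinOn (fun z => z ⬝ᵥ A *ᵥ z) S y) :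
    x = y := by
  by_contra hne
  have hpos : 0 < (x - y) ⬝ᵥ A *ᵥ (x - y) := by
    simpa using hA.dotProduct_mulVec_pos (sub_ne_zero.mpr hne)
  have hmid : (1 / 2 : ℝ) • x + (1 / 2 : ℝ) • y ∈ S := hS hxS hyS (by norm_num) (by norm_num)
    (by norm_num)
  have hmid_val : ((1 / 2 : ℝ) • x + (1 / 2 : ℝ) • y) ⬝ᵥ A *ᵥ ((1 / 2 : ℝ) • x + (1 / 2 : ℝ) • y)
      = (x + y) ⬝ᵥ A *ᵥ (x + y) / 4 := by
    rw [← smul_add, smul_dotProduct, mulVec_smul, dotProduct_smul, smul_eq_mul, smul_eq_mul]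
    ring
  have hx_le_mid := isMinOn_iff.mp hx _ hmid
  have hy_le_x := isMinOn_iff.mp hy x hxS
  have hpar := parallelogram_law_dotProduct_mulVec A x y
  linarith

end QuadraticForm

open Finset Function in
theorem isMinOn_fiberSum {ι κ : Type*} [Fintype ι] [Fintype κ] [DecidableEq κ]
    {A : Matrix κ κ ℝ} {f : ι → κ} (hf : Surjective f) {β : ι → ℝ}
    (hβ : IsMinOn (fun γ => γ ⬝ᵥ A.submatrix f f *ᵥ γ) {γ | ∑ i, γ i = 1} β) :
    IsMinOn (fun α => α ⬝ᵥ A *ᵥ α) {α | ∑ a, α a = 1} (fiberSum f β) := by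
  rw [isMinOn_iff] at hβ ⊢
  intro α hα
  obtain ⟨γ, rfl⟩ := fiberSum_surjective hf α
  simp only [← dotProduct_submatrix_mulVec]
  exact hβ γ (by simpa [sum_fiberSum] using hα)

theorem stmt_8_general {Ω : Type*} [MeasurableSpace Ω] (μ : Measure Ω)
    {k : ℕ} (hk : 0 < k) (Vh : Fin k → Ω → ℝ) (c : ℝ)
    (W : Fin (k + 1) → Ω → ℝ)
    (hW : ∀ i : Fin k, W i.castSucc = Vh i)
    (hWlast : ∀ᵐ ω ∂μ, W (Fin.last k) ω = Vh ⟨k - 1, Nat.sub_lt hk one_pos⟩ ω)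
    (A : Matrix (Fin k) (Fin k) ℝ)
    (hA : ∀ i j, A i j = ∫ ω, (Vh i ω - c) * (Vh j ω - c) ∂μ)
    (B : Matrix (Fin (k + 1)) (Fin (k + 1)) ℝ)
    (hB : ∀ i j, B i j = ∫ ω, (W i ω - c) * (W j ω - c) ∂μ)
    (hApd : A.PosDef)
    (αh : Fin k → ℝ) (hαsum : ∑ i, αh i = 1)
    (hαmin : ∀ α : Fin k → ℝ, ∑ i, α i = 1 → αh ⬝ᵥ A *ᵥ αh ≤ α ⬝ᵥ A *ᵥ α)
    (β : Fin (k + 1) → ℝ) (hβsum : ∑ i, β i = 1)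
    (hβmin : ∀ γ : Fin (k + 1) → ℝ, ∑ i, γ i = 1 → β ⬝ᵥ B *ᵥ β ≤ γ ⬝ᵥ B *ᵥ γ) :
    ∀ᵐ ω ∂μ, ∑ i, β i * W i ω = ∑ i, αh i * Vh i ω := by
  let f : Fin (k + 1) → Fin k := Fin.snoc (α := fun _ => Fin k) id ⟨k - 1, Nat.sub_lt hk one_pos⟩
  have hf : Function.Surjective f := fun a => ⟨a.castSucc, Fin.snoc_castSucc ..⟩
  have hWf : ∀ i, ∀ᵐ ω ∂μ, W i ω = Vh (f i) ω := by
    refine Fin.lastCases ?_ fun a => ?_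
    · simpa [f] using hWlast
    · simp [f, hW]
  have hBA : B = A.submatrix f f := by
    ext i j
    rw [hB, submatrix_apply, hA]
    refine integral_congr_ae ?_
    filter_upwards [hWf i, hWf j] with ω hi hj
    rw [hi, hj]
  have hβα : fiberSum f β = αh := by
    refine hApd.eq_of_isMinOn convex_setOf_sum_eq_one (by simpa [sum_fiberSum]) hαsum
      (isMinOn_fiberSum hf ?_) (isMinOn_iff.mpr hαmin)
    exact hBA ▸ isMinOn_iff.mpr hβmin
  filter_upwards [ae_all_iff.mpr hWf] with ω hω
  calc ∑ i, β i * W i ω = β ⬝ᵥ ((fun a => Vh a ω) ∘ f) := by simp [dotProduct, hω]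
    _ = ∑ a, αh a * Vh a ω := by rw [dotProduct_comp, hβα]; rfl

theorem stmt_8 {Ω : Type*} [MeasurableSpace Ω] (μ : Measure Ω) [IsProbabilityMeasure μ]
    {k : ℕ} (hk : 0 < k) (Vh : Fin k → Ω → ℝ) (c : ℝ)
    (W : Fin (k + 1) → Ω → ℝ)
    (hW : ∀ i : Fin k, W i.castSucc = Vh i)
    (hWlast : ∀ᵐ ω ∂μ, W (Fin.last k) ω = Vh ⟨k - 1, Nat.sub_lt hk one_pos⟩ ω)
    (hint : ∀ i j, Integrable (fun ω => (W i ω - c) * (W j ω - c)) μ)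
    (A : Matrix (Fin k) (Fin k) ℝ)
    (hA : ∀ i j, A i j = ∫ ω, (Vh i ω - c) * (Vh j ω - c) ∂μ)
    (B : Matrix (Fin (k + 1)) (Fin (k + 1)) ℝ)
    (hB : ∀ i j, B i j = ∫ ω, (W i ω - c) * (W j ω - c) ∂μ)
    (hApd : A.PosDef)
    (αh : Fin k → ℝ) (hαsum : ∑ i, αh i = 1)
    (hαmin : ∀ α : Fin k → ℝ, ∑ i, α i = 1 → αh ⬝ᵥ A *ᵥ αh ≤ α ⬝ᵥ A *ᵥ α)
    (β : Fin (k + 1) → ℝ) (hβsum : ∑ i, β i = 1)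
    (hβmin : ∀ γ : Fin (k + 1) → ℝ, ∑ i, γ i = 1 → β ⬝ᵥ B *ᵥ β ≤ γ ⬝ᵥ B *ᵥ γ) :
    ∀ᵐ ω ∂μ, ∑ i, β i * W i ω = ∑ i, αh i * Vh i ω :=
  stmt_8_general μ hk Vh c W hW hWlast A hA B hB hApd αh hαsum hαmin β hβsum hβmin
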